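/- Let B be a real Banach space, C ⊆ B a convex subset, f : B → ℝ ∪ {+∞}, and k : B × B → ℝ a symmetric bilinear form with k(z,z) ≤ 0 for every z ∈ ΔC := Span({π − γ : π, γ ∈ C}). Define F(π,γ) = (1/2)·k(π,γ) + f(π) + f(γ) and assume there exists π₀ ∈ C with (1/2)·k(π₀,π₀) + 2·f(π₀) < +∞. If moreover either k is definite on ΔC (k(z,z) = 0 with z ∈ ΔC implies z = 0) or f is strictly convex, then every minimizer (π*, γ*) of F over C × C satisfies π* = γ*. -/
import Mathlib


open scoped ENNReal

noncomputable section

/-- The quadratic functional `L(π) = (1/2)·k(π,π) + 2·f(π)`, with values in `ℝ ∪ {±∞}`. -/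
def quadFun {B : Type*} [NormedAddCommGroup B] [NormedSpace ℝ B]
    (k : B →ₗ[ℝ] B →ₗ[ℝ] ℝ) (f : B → EReal) (π : B) : EReal :=
  ((1 / 2 * k π π : ℝ) : EReal) + 2 * f π

/-- The symmetrized (bi-convex relaxation) functional
`F(π,γ) = (1/2)·k(π,γ) + f(π) + f(γ)`. -/
def symmFun {B : Type*} [NormedAddCommGroup B] [NormedSpace ℝ B]
    (k : B →ₗ[ℝ] B →ₗ[ℝ] ℝ) (f : B → EReal) (π γ : B) : EReal :=
  ((1 / 2 * k π γ : ℝ) : EReal) + f π + f γ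

private lemma ereal_two_mul' (x : EReal) (h : x ≠ ⊥) : (2:EReal) * x = x + x := by
  induction x using EReal.rec with
  | bot => exact absurd rfl h
  | coe r =>
    rw [show (2:EReal) = ((2:ℝ):EReal) from rfl, ← EReal.coe_mul, ← EReal.coe_add]
    norm_num [two_mul]
  | top => rw [EReal.mul_top_of_pos (by norm_num)]; simp

/-- Under the hypotheses of the tight-relaxation theorem, if moreover
`k` is definite on `ΔC` or `f` is strictly convex on its effective domain, every minimizer
`(π*, γ*)` of `F` over `C × C` satisfies `π* = γ*`. -/
theorem quadratic_relaxation_minimizers_eq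
    {B : Type*} [NormedAddCommGroup B] [NormedSpace ℝ B] [CompleteSpace B]
    (C : Set B) (hC : Convex ℝ C)
    (f : B → EReal) (hf : ∀ x, f x ≠ ⊥)
    (k : B →ₗ[ℝ] B →ₗ[ℝ] ℝ) (hksymm : ∀ x y, k x y = k y x)
    (hkneg : ∀ z ∈ Submodule.span ℝ {z : B | ∃ π ∈ C, ∃ γ ∈ C, z = π - γ}, k z z ≤ 0)
    (π₀ : B) (hπ₀ : π₀ ∈ C) (hfin : quadFun k f π₀ < ⊤)
    (halt :
      (∀ z ∈ Submodule.span ℝ {z : B | ∃ π ∈ C, ∃ γ ∈ C, z = π - γ}, k z z = 0 → z = 0) ∨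
      (∀ x y : B, x ≠ y → f x ≠ ⊤ → f y ≠ ⊤ → ∀ t : ℝ, 0 < t → t < 1 →
        f (t • x + (1 - t) • y) < (t : EReal) * f x + ((1 - t : ℝ) : EReal) * f y))
    (πs γs : B) (hπs : πs ∈ C) (hγs : γs ∈ C)
    (hmin : ∀ π ∈ C, ∀ γ ∈ C, symmFun k f πs γs ≤ symmFun k f π γ) :
    πs = γs := by
  by_contra hne
  -- the difference lies in the span
  have hz : πs - γs ∈ Submodule.span ℝ {z : B | ∃ π ∈ C, ∃ γ ∈ C, z = π - γ} :=
    Submodule.subset_span ⟨πs, hπs, γs, hγs, rfl⟩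
  have hkz : k (πs - γs) (πs - γs) = k πs πs - 2 * k πs γs + k γs γs := by
    simp [map_sub, hksymm γs πs]; ring
  have hzneg : k πs πs - 2 * k πs γs + k γs γs ≤ 0 := hkz ▸ hkneg _ hz
  -- finiteness of the minimal value
  have hle0 : symmFun k f πs γs ≤ quadFun k f π₀ := by
    have h := hmin π₀ hπ₀ π₀ hπ₀
    have : symmFun k f π₀ π₀ = quadFun k f π₀ := by
      rw [symmFun, quadFun, ereal_two_mul' _ (hf π₀), add_assoc]
    rwa [this] at h
  have hfinmin : symmFun k f πs γs < ⊤ := lt_of_le_of_lt hle0 hfin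
  have hfπt : f πs ≠ ⊤ := by
    intro h
    rw [symmFun, h, EReal.add_top_of_ne_bot (EReal.coe_ne_bot _),
      EReal.top_add_of_ne_bot (hf γs)] at hfinmin
    exact lt_irrefl _ hfinmin
  have hfγt : f γs ≠ ⊤ := by
    intro h
    rw [symmFun, h, EReal.add_top_of_ne_bot] at hfinmin
    · exact lt_irrefl _ hfinmin
    · intro hb
      exact (hf πs) (by
        rcases EReal.add_eq_bot_iff.mp hb with h1 | h1
        · exact absurd h1 (EReal.coe_ne_bot _)
        · exact h1)
  obtain ⟨p, hp⟩ : ∃ r : ℝ, f πs = r := by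
    lift f πs to ℝ using ⟨hfπt, hf πs⟩ with r hr; exact ⟨r, rfl⟩
  obtain ⟨q, hq⟩ : ∃ r : ℝ, f γs = r := by
    lift f γs to ℝ using ⟨hfγt, hf γs⟩ with r hr; exact ⟨r, rfl⟩
  -- real reformulation of minimality at (πs, πs) and (γs, γs)
  have key : ∀ x ∈ C, ∀ y ∈ C, ∀ rx ry : ℝ, f x = (rx : EReal) → f y = (ry : EReal) →
      1/2 * k πs γs + p + q ≤ 1/2 * k x y + rx + ry := by
    intro x hx y hy rx ry hrx hry
    have h := hmin x hx y hy
    rw [symmFun, symmFun, hp, hq, hrx, hry, ← EReal.coe_add, ← EReal.coe_add,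
      ← EReal.coe_add, ← EReal.coe_add] at h
    exact_mod_cast h
  rcases halt with hdef | hsc
  · -- definite case
    have h1 := key πs hπs πs hπs p p hp hp
    have h2 := key γs hγs γs hγs q q hq hq
    have : k (πs - γs) (πs - γs) = 0 := by rw [hkz]; linarith
    exact hne (sub_eq_zero.mp (hdef _ hz this))
  · -- strict convexity case
    set m : B := (1/2:ℝ) • πs + (1/2:ℝ) • γs with hm
    have hmC : m ∈ C := hC hπs hγs (by norm_num) (by norm_num) (by norm_num)
    have hstr := hsc πs γs hne hfπt hfγt (1/2) (by norm_num) (by norm_num)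
    rw [hp, hq] at hstr
    have hhalf : ((1 - (1/2:ℝ) : ℝ) : EReal) = ((1/2:ℝ) : EReal) := by norm_num
    rw [hhalf] at hstr
    have hstr' : f m < (((1/2:ℝ) * p + (1/2:ℝ) * q : ℝ) : EReal) := by
      calc f m < ((1/2:ℝ) : EReal) * (p:EReal) + ((1/2:ℝ) : EReal) * (q:EReal) := by
            convert hstr using 3; norm_num
        _ = _ := by rw [← EReal.coe_mul, ← EReal.coe_mul, ← EReal.coe_add]
    obtain ⟨r, hr⟩ : ∃ r : ℝ, f m = r := by
      lift f m to ℝ using ⟨ne_top_of_lt hstr', hf m⟩ with r hrr; exact ⟨r, rfl⟩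
    have hrlt : r < 1/2 * p + 1/2 * q := by
      rw [hr] at hstr'; exact_mod_cast hstr'
    have hkm : k m m = (k πs πs + 2 * k πs γs + k γs γs) / 4 := by
      rw [hm]; simp [map_add, map_smul, smul_eq_mul, hksymm γs πs]; ring
    have h3 := key m hmC m hmC r r hr hr
    rw [hkm] at h3
    linarith

end
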